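/- arXiv:2001.02071 — 2 statements merged into one kernel-verified Lean document; each statement's English description precedes it below -/
import Mathlib

section
/- Suppose Assumption G holds (u_i is upper semicontinuous, concave, u_i(x⁰_i) finite, and u_i(x + r·g) > u_i(x) whenever u_i(x) > −∞ and r > 0), so that D_i(0) = 0. Then a vector p ∈ ℝ^J is a supergradient of D_i at 0 if and only if p·g = 1 and p·w ≥ p·x⁰_i for every w ∈ ℝ^J with u_i(w) ≥ u_i(x⁰_i). -/
open scoped BigOperators
open Metric Filter

noncomputable section

/-- The inner product `p·y = ∑ j, p j * y j`. -/
def dotp {J : Type*} [Fintype J] (p y : EuclideanSpace ℝ J) : ℝ := ∑ j, p j * y j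

/-- A function `u : ℝ^J → ℝ ∪ {±∞}` is concave iff its hypograph is convex. -/
def HypoConcave {J : Type*} [Fintype J] (u : EuclideanSpace ℝ J → EReal) : Prop :=
  Convex ℝ {q : EuclideanSpace ℝ J × ℝ | (q.2 : EReal) ≤ u q.1}

/-- Indifference price function `D(x) = sup {r ∈ ℝ : u(x⁰ + x − r·g) ≥ u(x⁰)}`,
the supremum being taken in `ℝ ∪ {±∞}`. -/
def indiff {J : Type*} [Fintype J] (u : EuclideanSpace ℝ J → EReal)
    (x0 g x : EuclideanSpace ℝ J) : EReal :=
  sSup {e : EReal | ∃ r : ℝ, e = (r : EReal) ∧ u x0 ≤ u (x0 + x - r • g)}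

/-- `p` is a supergradient of `D` at `xb`: `D xb` is finite and
`D x ≤ D xb + p·(x − xb)` for all `x`. -/
def IsSupergradient {J : Type*} [Fintype J] (D : EuclideanSpace ℝ J → EReal)
    (p xb : EuclideanSpace ℝ J) : Prop :=
  D xb ≠ ⊥ ∧ D xb ≠ ⊤ ∧ ∀ x, D x ≤ D xb + ((dotp p (x - xb) : ℝ) : EReal)

/-- Optimal value `v(z)` of the perturbed market clearing problem `(P_z)`. -/
def marketValue {I J : Type*} [Fintype I] [Fintype J]
    (D : I → EuclideanSpace ℝ J → EReal) (z : EuclideanSpace ℝ J) : EReal :=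
  sSup {e : EReal | ∃ x : I → EuclideanSpace ℝ J, (∑ i, x i) = z ∧ e = ∑ i, D i (x i)}

/-- Optimal value of problem `(P')`, the total consumer surplus at allocation `w`. -/
def CSval {I J : Type*} [Fintype I] [Fintype J]
    (u : I → EuclideanSpace ℝ J → EReal) (g : EuclideanSpace ℝ J)
    (w : I → EuclideanSpace ℝ J) : EReal :=
  sSup {e : EReal | ∃ s : ℝ, e = (s : EReal) ∧ ∃ z : I → EuclideanSpace ℝ J,
    (∑ i, z i) + s • g = ∑ i, w i ∧ ∀ i, u i (w i) ≤ u i (z i)}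

/-- Recession function `u^∞(y) = inf_{α>0} (u(x⁰ + α·y) − u(x⁰))/α`. -/
def recession {J : Type*} [Fintype J] (u : EuclideanSpace ℝ J → EReal)
    (x0 y : EuclideanSpace ℝ J) : EReal :=
  sInf {e : EReal | ∃ α : ℝ, 0 < α ∧ e = (u (x0 + α • y) - u x0) / (α : EReal)}

/-- Pareto efficiency of an allocation `x` with total endowment `∑ i, x i`. -/
def ParetoEfficient {I J : Type*} [Fintype I] [Fintype J]
    (u : I → EuclideanSpace ℝ J → EReal) (x : I → EuclideanSpace ℝ J) : Prop :=
  ¬ ∃ x' : I → EuclideanSpace ℝ J, (∑ i, x' i) = (∑ i, x i) ∧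
      (∀ i, u i (x i) ≤ u i (x' i)) ∧ ∃ i, u i (x i) < u i (x' i)

/-!
Strict monotonicity along `g` makes `D(0) = 0`, so `p` is a supergradient at `0` exactly
when `D(x) ≤ p·x` for all `x`. Since `D(t·g) ≥ t` for every real `t`, this forces `p·g = 1`;
given `p·g = 1`, the bound `r ≤ p·x` for every `r` with `u(x⁰ + x − r·g) ≥ u(x⁰)` is the
statement that `p` supports the upper level set `{w | u w ≥ u x⁰}` at `x⁰`.
-/

section Dotp

variable {J : Type*} [Fintype J]

lemma dotp_add (p a b : EuclideanSpace ℝ J) : dotp p (a + b) = dotp p a + dotp p b := by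
  simp [dotp, mul_add, Finset.sum_add_distrib]

lemma dotp_sub (p a b : EuclideanSpace ℝ J) : dotp p (a - b) = dotp p a - dotp p b := by
  simp [dotp, mul_sub, Finset.sum_sub_distrib]

lemma dotp_smul (p a : EuclideanSpace ℝ J) (c : ℝ) : dotp p (c • a) = c * dotp p a := by
  simp [dotp, Finset.mul_sum, mul_left_comm]

end Dotp

section Indiff

variable {J : Type*} [Fintype J] (u : EuclideanSpace ℝ J → EReal) (g x0 : EuclideanSpace ℝ J)

lemma le_indiff {x : EuclideanSpace ℝ J} {r : ℝ} (h : u x0 ≤ u (x0 + x - r • g)) :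
    (r : EReal) ≤ indiff u x0 g x :=
  le_sSup ⟨r, rfl, h⟩

lemma indiff_le_iff {x : EuclideanSpace ℝ J} {c : EReal} :
    indiff u x0 g x ≤ c ↔ ∀ r : ℝ, u x0 ≤ u (x0 + x - r • g) → (r : EReal) ≤ c := by
  refine ⟨fun h r hr => (le_indiff u g x0 hr).trans h, fun h => sSup_le ?_⟩
  rintro e ⟨r, rfl, hr⟩
  exact h r hr

lemma indiff_zero (hfin : u x0 ≠ ⊥)
    (hmono : ∀ x : EuclideanSpace ℝ J, ∀ r : ℝ, u x ≠ ⊥ → 0 < r → u x < u (x + r • g)) :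
    indiff u x0 g 0 = 0 := by
  refine le_antisymm ((indiff_le_iff u g x0).2 fun r hr => ?_) (le_indiff u g x0 (by simp))
  by_contra! hpos
  rw [add_zero] at hr
  have hbot : u (x0 - r • g) ≠ ⊥ := fun h => hfin (le_bot_iff.1 (h ▸ hr))
  have hlt := hmono _ r hbot (by exact_mod_cast hpos)
  rw [sub_add_cancel] at hlt
  exact (hlt.trans_le hr).false

lemma dotp_eq_one_of_indiff_le_dotp {p : EuclideanSpace ℝ J}
    (hp : ∀ x, indiff u x0 g x ≤ dotp p x) : dotp p g = 1 := by
  have key (t : ℝ) : t ≤ t * dotp p g := by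
    have h := (le_indiff u g x0 (x := t • g) (r := t) (by simp)).trans (hp (t • g))
    rw [dotp_smul] at h
    exact_mod_cast h
  nlinarith [key 1, key (-1)]

lemma dotp_le_of_indiff_le_dotp {p : EuclideanSpace ℝ J}
    (hp : ∀ x, indiff u x0 g x ≤ dotp p x) {w : EuclideanSpace ℝ J} (hw : u x0 ≤ u w) :
    dotp p x0 ≤ dotp p w := by
  have h := (le_indiff u g x0 (x := w - x0) (r := 0) (by simpa using hw)).trans (hp (w - x0))
  rw [dotp_sub] at h
  have : (0 : ℝ) ≤ dotp p w - dotp p x0 := by exact_mod_cast h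
  linarith

lemma indiff_le_dotp_iff (p : EuclideanSpace ℝ J) :
    (∀ x, indiff u x0 g x ≤ dotp p x) ↔
      (dotp p g = 1 ∧ ∀ w, u x0 ≤ u w → dotp p x0 ≤ dotp p w) := by
  refine ⟨fun hp => ⟨dotp_eq_one_of_indiff_le_dotp u g x0 hp,
    fun w => dotp_le_of_indiff_le_dotp u g x0 hp⟩, ?_⟩
  rintro ⟨hg, hsupp⟩ x
  refine (indiff_le_iff u g x0).2 fun r hr => ?_
  have h := hsupp _ hr
  rw [dotp_sub, dotp_add, dotp_smul, hg] at h
  exact_mod_cast (by linarith : r ≤ dotp p x)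

end Indiff

lemma isSupergradient_zero_iff_of_eq_zero {J : Type*} [Fintype J]
    {D : EuclideanSpace ℝ J → EReal} (hD : D 0 = 0) (p : EuclideanSpace ℝ J) :
    IsSupergradient D p 0 ↔ ∀ x, D x ≤ dotp p x := by
  simp [IsSupergradient, hD]

theorem supergradient_at_zero_iff_general
    {J : Type*} [Fintype J]
    (u : EuclideanSpace ℝ J → EReal) (g x0 : EuclideanSpace ℝ J)
    (hfin : u x0 ≠ ⊥)
    (hmono : ∀ x : EuclideanSpace ℝ J, ∀ r : ℝ, u x ≠ ⊥ → 0 < r →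
      u x < u (x + r • g))
    (p : EuclideanSpace ℝ J) :
    IsSupergradient (indiff u x0 g) p 0 ↔
      (dotp p g = 1 ∧ ∀ w : EuclideanSpace ℝ J, u x0 ≤ u w →
        dotp p x0 ≤ dotp p w) := by
  rw [isSupergradient_zero_iff_of_eq_zero (indiff_zero u g x0 hfin hmono)]
  exact indiff_le_dotp_iff u g x0 p

/-- Lemma ve, 2 ⇔ 3: characterization of supergradients of the
indifference price function at 0. -/
theorem supergradient_at_zero_iff
    {J : Type*} [Fintype J] [Nonempty J]
    (u : EuclideanSpace ℝ J → EReal) (g x0 : EuclideanSpace ℝ J)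
    (husc : UpperSemicontinuous u)
    (hconc : HypoConcave u)
    (hne_top : ∀ x, u x ≠ ⊤)
    (hfin : u x0 ≠ ⊥)
    (hmono : ∀ x : EuclideanSpace ℝ J, ∀ r : ℝ, u x ≠ ⊥ → 0 < r →
      u x < u (x + r • g))
    (p : EuclideanSpace ℝ J) :
    IsSupergradient (indiff u x0 g) p 0 ↔
      (dotp p g = 1 ∧ ∀ w : EuclideanSpace ℝ J, u x0 ≤ u w →
        dotp p x0 ≤ dotp p w) :=
  supergradient_at_zero_iff_general u g x0 hfin hmono p
end
end

section
/- Suppose Assumption G holds (each u_i is upper semicontinuous, concave, u_i(x⁰_i) finite, and u_i(x + r·g) > u_i(x) whenever u_i(x) > −∞ and r > 0) and Assumption S holds: there is ε > 0 such that v(z) := sup{∑_i D_i(x_i) : ∑_i x_i = z} is finite for all ‖z‖ ≤ ε. If the allocation x⁰ = (x⁰_i)_{i∈I} is Pareto efficient, then there exists a price vector p ∈ ℝ^J with p·g = 1 such that for every i ∈ I, p·w ≥ p·x⁰_i for all w ∈ ℝ^J with u_i(w) ≥ u_i(x⁰_i). -/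
open scoped BigOperators
open Metric Filter

noncomputable section

/-!
Call `C ⊆ ℝ^J × ℝ` the set of pairs `(z, t)` such that the aggregate trade `z` can be split among
the agents, each paying some `rᵢ` in numeraire with `∑ rᵢ ≥ t`, without leaving anyone worse off
than at `x⁰`. Concavity makes `C` convex; Pareto efficiency of `x⁰` says that `(0, t) ∈ C` exactly
when `t ≤ 0`, and Assumption S says that every fibre of `C` over a neighbourhood of `0` is nonempty.
Hence `C` has nonempty interior and `(0, 0)` lies on its boundary, so a hyperplane supports `C`
there; it is not vertical because of the nonempty fibres, so it is the graph of a linear `φ` with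
`t ≤ φ z` on `C`. The Riesz representative `p` of `φ` is the price: `(±g, ±1) ∈ C` gives
`p·g = 1`, and `(w - x⁰ᵢ, 0) ∈ C` whenever `uᵢ(w) ≥ uᵢ(x⁰ᵢ)`.
-/

open Topology

section Supergradient

theorem zero_notMem_interior_of_fiber_zero {E : Type*} [TopologicalSpace E] [Zero E]
    {C : Set (E × ℝ)} (hfib : ∀ t : ℝ, ((0 : E), t) ∈ C ↔ t ≤ 0) :
    (0 : E × ℝ) ∉ interior C := by
  intro h
  have hvert : ∀ᶠ t in 𝓝 (0 : ℝ), ((0 : E), t) ∈ C :=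
    (continuous_const.prodMk continuous_id).tendsto' (0 : ℝ) (0 : E × ℝ) rfl
      |>.eventually (mem_interior_iff_mem_nhds.1 h)
  obtain ⟨t, ht, htpos⟩ :=
    ((hvert.filter_mono (nhdsWithin_le_nhds (s := Set.Ioi 0))).and self_mem_nhdsWithin).exists
  exact htpos.not_ge ((hfib t).1 ht)

variable {E : Type*} [NormedAddCommGroup E] [NormedSpace ℝ E]

theorem ContinuousLinearMap.eq_zero_of_eventually_nonpos {ψ : E →L[ℝ] ℝ}
    (h : ∀ᶠ z in 𝓝 0, ψ z ≤ 0) : ψ = 0 := by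
  have hneg : ∀ᶠ z in 𝓝 (0 : E), ψ (-z) ≤ 0 :=
    (continuous_neg.tendsto' (0 : E) 0 neg_zero).eventually h
  have hker : LinearMap.ker (ψ : E →ₗ[ℝ] ℝ) = ⊤ := by
    refine Submodule.eq_top_of_nonempty_interior' _ ⟨0, mem_interior_iff_mem_nhds.2 ?_⟩
    filter_upwards [h, hneg] with z hz hz'
    rw [map_neg] at hz'
    exact le_antisymm hz (neg_nonpos.1 hz')
  ext z
  exact LinearMap.congr_fun (LinearMap.ker_eq_top.1 hker) z

variable {C : Set (E × ℝ)}

theorem Convex.interior_nonempty_of_fiber_zero [FiniteDimensional ℝ E] (hC : Convex ℝ C)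
    (hfib : ∀ t : ℝ, ((0 : E), t) ∈ C ↔ t ≤ 0) (hnear : ∀ᶠ z in 𝓝 (0 : E), ∃ t, (z, t) ∈ C) :
    (interior C).Nonempty := by
  have h0 : (0 : E × ℝ) ∈ C := (hfib 0).2 le_rfl
  rw [hC.interior_nonempty_iff_affineSpan_eq_top,
    AffineSubspace.affineSpan_eq_top_iff_vectorSpan_eq_top_of_nonempty ℝ (E × ℝ) (E × ℝ) ⟨0, h0⟩,
    vectorSpan_eq_span_vsub_set_right ℝ h0]
  simp only [vsub_eq_sub, sub_zero, Set.image_id']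
  have hup : ((0 : E), (1 : ℝ)) ∈ Submodule.span ℝ C := by
    simpa using Submodule.neg_mem _ (Submodule.subset_span ((hfib (-1)).2 (by norm_num)))
  have hhor : (Submodule.span ℝ C).comap (LinearMap.inl ℝ E ℝ) = ⊤ := by
    refine Submodule.eq_top_of_nonempty_interior' _ ⟨0, mem_interior_iff_mem_nhds.2 ?_⟩
    filter_upwards [hnear] with z ⟨t, hzt⟩
    have : (z, (0 : ℝ)) = (z, t) - t • ((0 : E), (1 : ℝ)) := by ext <;> simp
    rw [SetLike.mem_coe, Submodule.mem_comap, LinearMap.inl_apply, this]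
    exact Submodule.sub_mem _ (Submodule.subset_span hzt) (Submodule.smul_mem _ t hup)
  refine Submodule.eq_top_iff'.2 fun q => ?_
  have : q = LinearMap.inl ℝ E ℝ q.1 + q.2 • ((0 : E), (1 : ℝ)) := by ext <;> simp
  rw [this]
  exact Submodule.add_mem _ (Submodule.mem_comap.1 (hhor ▸ Submodule.mem_top))
    (Submodule.smul_mem _ _ hup)

theorem Convex.exists_supergradient_of_fiber_zero [FiniteDimensional ℝ E] (hC : Convex ℝ C)
    (hfib : ∀ t : ℝ, ((0 : E), t) ∈ C ↔ t ≤ 0) (hnear : ∀ᶠ z in 𝓝 (0 : E), ∃ t, (z, t) ∈ C) :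
    ∃ φ : E →L[ℝ] ℝ, ∀ q ∈ C, q.2 ≤ φ q.1 := by
  obtain ⟨f, hf_ne, hfC⟩ := geometric_hahn_banach_of_nonempty_interior_point hC
    (zero_notMem_interior_of_fiber_zero hfib) (hC.interior_nonempty_of_fiber_zero hfib hnear)
  simp only [map_zero] at hfC
  set ψ : E →L[ℝ] ℝ := f.comp (ContinuousLinearMap.inl ℝ E ℝ)
  set c : ℝ := f ((0 : E), (1 : ℝ))
  have hsplit : ∀ q : E × ℝ, f q = ψ q.1 + q.2 * c := fun q => by
    have : q = (q.1, (0 : ℝ)) + q.2 • ((0 : E), (1 : ℝ)) := by ext <;> simp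
    conv_lhs => rw [this, map_add, map_smul, smul_eq_mul]
    rfl
  have hc_nonneg : 0 ≤ c := by
    have := hfC _ ((hfib (-1)).2 (by norm_num))
    rw [hsplit] at this
    simpa using this
  -- a vertical hyperplane cannot support `C`, whose fibres over a neighbourhood of `0` are nonempty
  have hc : 0 < c := by
    refine hc_nonneg.lt_of_ne fun hc0 => hf_ne ?_
    have hψ : ψ = 0 := ContinuousLinearMap.eq_zero_of_eventually_nonpos <| by
      filter_upwards [hnear] with z ⟨t, hzt⟩
      simpa [hsplit, ← hc0] using hfC _ hzt
    refine ContinuousLinearMap.ext fun q => ?_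
    rw [hsplit, hψ, ← hc0]
    simp
  refine ⟨-c⁻¹ • ψ, fun q hq => ?_⟩
  have := hfC q hq
  rw [hsplit] at this
  calc q.2 ≤ -ψ q.1 / c := by rw [le_div_iff₀ hc]; linarith
    _ = (-c⁻¹ • ψ) q.1 := by simp [div_eq_inv_mul]

end Supergradient

section Economy

variable {I J : Type*}

/-- `indiff u x0 g x` is the supremum of the `r` with `(x, r) ∈ acceptableTrades u x0 g`. -/
def acceptableTrades (u : EuclideanSpace ℝ J → EReal) (x0 g : EuclideanSpace ℝ J) :
    Set (EuclideanSpace ℝ J × ℝ) :=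
  {q | u x0 ≤ u (x0 + q.1 - q.2 • g)}

theorem zero_mem_acceptableTrades (u : EuclideanSpace ℝ J → EReal) (x0 g : EuclideanSpace ℝ J) :
    0 ∈ acceptableTrades u x0 g := by
  simp [acceptableTrades]

variable [Fintype I]

/-- The hypograph of `marketValue (fun i => indiff (u i) (x0 i) g)`, up to its boundary. -/
def surplusSet (u : I → EuclideanSpace ℝ J → EReal) (g : EuclideanSpace ℝ J)
    (x0 : I → EuclideanSpace ℝ J) : Set (EuclideanSpace ℝ J × ℝ) :=
  {q | ∃ y : I → EuclideanSpace ℝ J × ℝ, (∀ i, y i ∈ acceptableTrades (u i) (x0 i) g) ∧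
    ∑ i, (y i).1 = q.1 ∧ q.2 ≤ ∑ i, (y i).2}

variable {u : I → EuclideanSpace ℝ J → EReal} {g : EuclideanSpace ℝ J}
  {x0 : I → EuclideanSpace ℝ J}

theorem mem_surplusSet_of_mem_acceptableTrades (i₀ : I) {q : EuclideanSpace ℝ J × ℝ}
    (hq : q ∈ acceptableTrades (u i₀) (x0 i₀) g) : q ∈ surplusSet u g x0 := by
  classical
  refine ⟨Pi.single i₀ q, fun i => ?_, by simp [← Prod.fst_sum], by simp [← Prod.snd_sum]⟩
  rcases eq_or_ne i i₀ with rfl | hi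
  · simpa using hq
  · simpa [hi] using zero_mem_acceptableTrades (u i) (x0 i) g

variable [Fintype J]

theorem ParetoEfficient.notMem_surplusSet [Nonempty I] (hpareto : ParetoEfficient u x0)
    (hfin : ∀ i, u i (x0 i) ≠ ⊥)
    (hmono : ∀ i, ∀ x : EuclideanSpace ℝ J, ∀ r : ℝ, u i x ≠ ⊥ → 0 < r →
      u i x < u i (x + r • g)) {t : ℝ} (ht : 0 < t) :
    ((0 : EuclideanSpace ℝ J), t) ∉ surplusSet u g x0 := by
  classical
  rintro ⟨y, hy, hy₁, hy₂⟩
  set s := ∑ i, (y i).2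
  obtain ⟨i₀⟩ := ‹Nonempty I›
  have hgain : ∀ i, u i (x0 i) < u i (x0 i + (y i).1 - (y i).2 • g + s • g) := fun i =>
    (hy i).trans_lt (hmono i _ s (ne_bot_of_le_ne_bot (hfin i) (hy i)) (ht.trans_le hy₂))
  let bonus : I → EuclideanSpace ℝ J := Pi.single i₀ (s • g)
  refine hpareto ⟨fun i => x0 i + (y i).1 - (y i).2 • g + bonus i, ?_,
    fun i => ?_, i₀, by simpa [bonus] using hgain i₀⟩
  · simp [bonus, Finset.sum_add_distrib, Finset.sum_sub_distrib, ← Finset.sum_smul, hy₁, s]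
  · rcases eq_or_ne i i₀ with rfl | hi
    · simpa [bonus] using (hgain i).le
    · simp only [bonus, Pi.single_eq_of_ne hi, add_zero]
      exact hy i

theorem ParetoEfficient.mem_surplusSet_zero_iff [Nonempty I] (hpareto : ParetoEfficient u x0)
    (hfin : ∀ i, u i (x0 i) ≠ ⊥)
    (hmono : ∀ i, ∀ x : EuclideanSpace ℝ J, ∀ r : ℝ, u i x ≠ ⊥ → 0 < r →
      u i x < u i (x + r • g)) (t : ℝ) :
    ((0 : EuclideanSpace ℝ J), t) ∈ surplusSet u g x0 ↔ t ≤ 0 :=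
  ⟨fun h => not_lt.1 fun ht => hpareto.notMem_surplusSet hfin hmono ht h,
    fun ht => ⟨0, fun i => zero_mem_acceptableTrades _ _ _, by simp, by simpa using ht⟩⟩

theorem exists_mem_acceptableTrades_of_indiff_ne_bot {u : EuclideanSpace ℝ J → EReal}
    {x0 g x : EuclideanSpace ℝ J} (h : indiff u x0 g x ≠ ⊥) :
    ∃ r : ℝ, (x, r) ∈ acceptableTrades u x0 g := by
  by_contra! hr
  exact h (sSup_eq_bot.2 fun e ⟨r, _, hle⟩ => absurd hle (hr r))

theorem exists_mem_surplusSet_of_marketValue_ne_bot {z : EuclideanSpace ℝ J}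
    (h : marketValue (fun i => indiff (u i) (x0 i) g) z ≠ ⊥) :
    ∃ t : ℝ, (z, t) ∈ surplusSet u g x0 := by
  obtain ⟨_, ⟨x, hx, rfl⟩, hne⟩ : ∃ e ∈ {e : EReal | ∃ x : I → EuclideanSpace ℝ J,
      ∑ i, x i = z ∧ e = ∑ i, indiff (u i) (x0 i) g (x i)}, e ≠ ⊥ := by
    by_contra! hbot
    exact h (sSup_eq_bot.2 hbot)
  have hr : ∀ i, ∃ r : ℝ, (x i, r) ∈ acceptableTrades (u i) (x0 i) g := fun i =>
    exists_mem_acceptableTrades_of_indiff_ne_bot fun hi =>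
      hne (WithBot.sum_eq_bot_iff.2 ⟨i, Finset.mem_univ i, hi⟩)
  choose r hr using hr
  exact ⟨∑ i, r i, fun i => (x i, r i), hr, hx, le_rfl⟩

theorem HypoConcave.convex_superlevel {u : EuclideanSpace ℝ J → EReal} (hu : HypoConcave u)
    (e : EReal) : Convex ℝ {w | e ≤ u w} := by
  intro x hx y hy a b ha hb hab
  refine EReal.ge_of_forall_gt_iff_ge.1 fun c hc => ?_
  have := hu (x := (x, c)) (y := (y, c)) (hc.le.trans hx) (hc.le.trans hy) ha hb hab
  simpa [← add_mul, hab] using this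

theorem HypoConcave.convex_acceptableTrades {u : EuclideanSpace ℝ J → EReal} (hu : HypoConcave u)
    (x0 g : EuclideanSpace ℝ J) : Convex ℝ (acceptableTrades u x0 g) := by
  intro q hq q' hq' a b ha hb hab
  have key := hu.convex_superlevel (u x0) hq hq' ha hb hab
  have harg : a • (x0 + q.1 - q.2 • g) + b • (x0 + q'.1 - q'.2 • g) =
      x0 + (a • q + b • q').1 - (a • q + b • q').2 • g := by
    obtain rfl : b = 1 - a := by linarith
    simp only [Prod.fst_add, Prod.snd_add, Prod.smul_fst, Prod.smul_snd, smul_eq_mul]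
    module
  rwa [Set.mem_ofPred_eq, harg] at key

theorem convex_surplusSet (hconc : ∀ i, HypoConcave (u i)) : Convex ℝ (surplusSet u g x0) := by
  rintro q ⟨y, hy, hy₁, hy₂⟩ q' ⟨y', hy', hy₁', hy₂'⟩ a b ha hb hab
  refine ⟨a • y + b • y', fun i => (hconc i).convex_acceptableTrades _ _ (hy i) (hy' i) ha hb hab,
    ?_, ?_⟩
  · simp [Finset.sum_add_distrib, ← Finset.smul_sum, hy₁, hy₁']
  · simp only [Prod.snd_add, Prod.smul_snd, Pi.add_apply, Pi.smul_apply, smul_eq_mul,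
      Finset.sum_add_distrib, ← Finset.mul_sum]
    gcongr

theorem dotp_eq_inner (p y : EuclideanSpace ℝ J) : dotp p y = inner ℝ p y := by
  simp [dotp, PiLp.inner_apply, mul_comm]

end Economy

theorem pareto_supporting_price_general
    {I J : Type*} [Fintype I] [Nonempty I] [Fintype J]
    (u : I → EuclideanSpace ℝ J → EReal) (g : EuclideanSpace ℝ J)
    (x0 : I → EuclideanSpace ℝ J)
    (hconc : ∀ i, HypoConcave (u i))
    (hfin : ∀ i, u i (x0 i) ≠ ⊥)
    (hmono : ∀ i, ∀ x : EuclideanSpace ℝ J, ∀ r : ℝ, u i x ≠ ⊥ → 0 < r →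
      u i x < u i (x + r • g))
    (hS : ∃ ε : ℝ, 0 < ε ∧ ∀ z : EuclideanSpace ℝ J, ‖z‖ ≤ ε →
      marketValue (fun i => indiff (u i) (x0 i) g) z ≠ ⊥ ∧
      marketValue (fun i => indiff (u i) (x0 i) g) z ≠ ⊤)
    (hpareto : ParetoEfficient u x0) :
    ∃ p : EuclideanSpace ℝ J, dotp p g = 1 ∧
      ∀ i, ∀ w : EuclideanSpace ℝ J, u i (x0 i) ≤ u i w →
        dotp p (x0 i) ≤ dotp p w := by
  obtain ⟨ε, hε, hv⟩ := hS
  have hnear : ∀ᶠ z in 𝓝 (0 : EuclideanSpace ℝ J), ∃ t, (z, t) ∈ surplusSet u g x0 := by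
    filter_upwards [closedBall_mem_nhds 0 hε] with z hz
    exact exists_mem_surplusSet_of_marketValue_ne_bot (hv z (by simpa using hz)).1
  obtain ⟨φ, hφ⟩ := (convex_surplusSet hconc).exists_supergradient_of_fiber_zero
    (hpareto.mem_surplusSet_zero_iff hfin hmono) hnear
  have hsupp : ∀ i (q : EuclideanSpace ℝ J × ℝ), q ∈ acceptableTrades (u i) (x0 i) g →
      q.2 ≤ φ q.1 := fun i q hq => hφ q (mem_surplusSet_of_mem_acceptableTrades i hq)
  refine ⟨(InnerProductSpace.toDual ℝ _).symm φ, ?_, fun i w hw => ?_⟩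
  all_goals simp only [dotp_eq_inner, InnerProductSpace.toDual_symm_apply]
  · obtain ⟨i⟩ := ‹Nonempty I›
    have h₁ := hsupp i (g, 1) (by simp [acceptableTrades])
    have h₂ := hsupp i (-g, -1) (by simp [acceptableTrades])
    simp only [map_neg] at h₁ h₂
    linarith
  · have := hsupp i (w - x0 i, 0) (by simpa [acceptableTrades] using hw)
    rw [map_sub] at this
    linarith

/-- Corollary ve, first part: every Pareto allocation admits a
supporting price vector. -/
theorem pareto_supporting_price
    {I J : Type*} [Fintype I] [Nonempty I] [Fintype J] [Nonempty J]
    (u : I → EuclideanSpace ℝ J → EReal) (g : EuclideanSpace ℝ J)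
    (x0 : I → EuclideanSpace ℝ J)
    (husc : ∀ i, UpperSemicontinuous (u i))
    (hconc : ∀ i, HypoConcave (u i))
    (hne_top : ∀ i x, u i x ≠ ⊤)
    (hfin : ∀ i, u i (x0 i) ≠ ⊥)
    (hmono : ∀ i, ∀ x : EuclideanSpace ℝ J, ∀ r : ℝ, u i x ≠ ⊥ → 0 < r →
      u i x < u i (x + r • g))
    (hS : ∃ ε : ℝ, 0 < ε ∧ ∀ z : EuclideanSpace ℝ J, ‖z‖ ≤ ε →
      marketValue (fun i => indiff (u i) (x0 i) g) z ≠ ⊥ ∧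
      marketValue (fun i => indiff (u i) (x0 i) g) z ≠ ⊤)
    (hpareto : ParetoEfficient u x0) :
    ∃ p : EuclideanSpace ℝ J, dotp p g = 1 ∧
      ∀ i, ∀ w : EuclideanSpace ℝ J, u i (x0 i) ≤ u i w →
        dotp p (x0 i) ≤ dotp p w :=
  pareto_supporting_price_general u g x0 hconc hfin hmono hS hpareto
end
end
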